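/- arXiv:1908.08888 — 2 statements merged into one kernel-verified Lean document; each statement's English description precedes it below -/
import Mathlib

section
/- Let α > 0, 1 ≤ p < ∞, 1 ≤ q < ∞. For any nonincreasing nonnegative function g on (0,1), the Lorentz-type quantity (∫₀¹ (t^{1/α} g(t))^{q} t^{q/p - 1} dt)^{1/q} is equivalent (with constants depending only on p, q, α) to (∫₀¹ (t^{1/p + 1/α} g(t))^q dt/t)^{1/q}; that is, ‖ g(t) t^{1/α} ‖_{L^{p,q}(0,1)} ≃ ‖g‖_{L^{pα/(p+α), q}(0,1)}, where the L^{p,q} norm of h is (∫₀¹ (t^{1/p} h^*(t))^q dt/t)^{1/q} and h^* denotes the decreasing rearrangement with respect to Lebesgue measure on (0,1). -/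
/-!
Write `f x = x ^ (1/α) * g x` and `f*` for its decreasing rearrangement.

Lower bound: `f ≥ s ^ (1/α) * g (3s)` on `(s, 3s]`, a set of measure `2s > s`, so
`f* s ≥ s ^ (1/α) * g (3s)`; the substitution `t = 3s` turns this into the lower estimate.

Upper bound: since `g` is nonincreasing, `f` on `(x/2, x)` is at least `2 ^ (-1/α) f x`, so
`f x ^ q ≲ ∫_{x/2}^x f u ^ q du/u`. Hence `f* t ^ q ≤ sup_{x > t} f x ^ q ≲ ∫_{t/2}^1 f u ^ q du/u`,
and integrating against `t ^ (q/p - 1)` and exchanging the order of integration (a Hardy-type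
inequality) bounds the left-hand side by `∫ u ^ (q/p) f u ^ q du/u`, which is the right-hand side.
-/

/-- Decreasing rearrangement with respect to Lebesgue measure on `(0,1)`. -/
noncomputable def decRearr (h : ℝ → ℝ) (s : ℝ) : ℝ :=
  sInf {l : ℝ | 0 ≤ l ∧
    (MeasureTheory.volume {x ∈ Set.Ioo (0:ℝ) 1 | l < |h x|}).toReal ≤ s}

open MeasureTheory Set
open scoped ENNReal

lemma rpow_mul_rpow_div_self {t y a q : ℝ} (ht : 0 < t) (hy : 0 ≤ y) :
    (t ^ a * y) ^ q / t = t ^ (a * q - 1) * y ^ q := by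
  rw [Real.mul_rpow (Real.rpow_nonneg ht.le a) hy, ← Real.rpow_mul ht.le,
    Real.rpow_sub ht, Real.rpow_one, mul_div_right_comm]

lemma lintegral_Ioo_ofReal_rpow {r c : ℝ} (hr : -1 < r) (hc : 0 ≤ c) :
    ∫⁻ t in Ioo 0 c, ENNReal.ofReal (t ^ r) = ENNReal.ofReal (c ^ (r + 1) / (r + 1)) := by
  have hint : IntegrableOn (fun t : ℝ => t ^ r) (Ioo 0 c) := by
    rw [← intervalIntegrable_iff_integrableOn_Ioo_of_le hc]
    exact intervalIntegral.intervalIntegrable_rpow' hr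
  rw [← ofReal_integral_eq_lintegral_ofReal hint
      ((ae_restrict_iff' measurableSet_Ioo).2 (ae_of_all _ fun t ht => Real.rpow_nonneg ht.1.le r)),
    ← integral_Ioc_eq_integral_Ioo, ← intervalIntegral.integral_of_le hc,
    integral_rpow (Or.inl hr), Real.zero_rpow (by linarith), sub_zero]

lemma lintegral_Ioo_comp_mul_left (F : ℝ → ℝ≥0∞) {k c : ℝ} (hk : 0 < k) :
    ∫⁻ s in Ioo 0 c, F (k * s) = ENNReal.ofReal k⁻¹ * ∫⁻ t in Ioo 0 (k * c), F t := by
  have h := lintegral_image_eq_lintegral_abs_deriv_mul (f := fun s => k * s) (f' := fun _ => k)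
    (measurableSet_Ioo (a := 0) (b := c))
    (fun s _ => by simpa using ((hasDerivAt_id s).const_mul k).hasDerivWithinAt)
    (mul_right_injective₀ hk.ne').injOn F
  rw [image_mul_left_Ioo hk, mul_zero, abs_of_pos hk,
    lintegral_const_mul' _ _ ENNReal.ofReal_ne_top] at h
  rw [h, ← mul_assoc, ← ENNReal.ofReal_mul (inv_nonneg.2 hk.le), inv_mul_cancel₀ hk.ne',
    ENNReal.ofReal_one, one_mul]

lemma lintegral_mul_lintegral_Ioo_div_two_le {w H : ℝ → ℝ≥0∞} (hw : Measurable w)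
    (hH : AEMeasurable H (volume.restrict (Ioo 0 1))) :
    ∫⁻ t in Ioo 0 1, w t * ∫⁻ u in Ioo (t / 2) 1, H u
      ≤ ∫⁻ u in Ioo 0 1, (∫⁻ t in Ioo 0 (2 * u), w t) * H u := by
  have hmeas : Measurable fun z : ℝ × ℝ => (Iio (2 * z.2)).indicator w z.1 :=
    Measurable.ite (measurableSet_lt measurable_fst (measurable_snd.const_mul 2))
      (hw.comp measurable_fst) measurable_const
  calc ∫⁻ t in Ioo 0 1, w t * ∫⁻ u in Ioo (t / 2) 1, H u
      ≤ ∫⁻ t in Ioo 0 1, ∫⁻ u in Ioo 0 1, (Iio (2 * u)).indicator w t * H u := by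
        refine setLIntegral_mono' measurableSet_Ioo fun t ht => ?_
        calc w t * ∫⁻ u in Ioo (t / 2) 1, H u
            ≤ ∫⁻ u in Ioo (t / 2) 1, w t * H u := lintegral_const_mul_le _ _
          _ = ∫⁻ u in Ioo (t / 2) 1, (Iio (2 * u)).indicator w t * H u :=
              setLIntegral_congr_fun measurableSet_Ioo fun u hu => by
                rw [indicator_of_mem (mem_Iio.2 (by linarith [hu.1] : t < 2 * u))]
          _ ≤ _ := lintegral_mono_set (Ioo_subset_Ioo_left (by linarith [ht.1]))
    _ = ∫⁻ u in Ioo 0 1, ∫⁻ t in Ioo 0 1, (Iio (2 * u)).indicator w t * H u :=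
        lintegral_lintegral_swap (hmeas.aemeasurable.mul hH.comp_snd)
    _ ≤ ∫⁻ u in Ioo 0 1, (∫⁻ t in Ioo 0 (2 * u), w t) * H u := by
        refine lintegral_mono fun u => ?_
        rw [lintegral_mul_const _ (hw.indicator measurableSet_Iio),
          setLIntegral_indicator measurableSet_Iio]
        gcongr
        exact fun t ht => ⟨ht.2.1, ht.1⟩

section decRearr

variable {h : ℝ → ℝ}

lemma decRearr_nonneg (h : ℝ → ℝ) (s : ℝ) : 0 ≤ decRearr h s :=
  Real.sInf_nonneg fun _ hl => hl.1

lemma toReal_volume_lt_abs_le {s M : ℝ} (hs : 0 ≤ s) (hM : ∀ x ∈ Ioo s 1, |h x| ≤ M) :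
    (volume {x ∈ Ioo 0 1 | M < |h x|}).toReal ≤ s := by
  refine ENNReal.toReal_le_of_le_ofReal hs ?_
  calc volume {x ∈ Ioo 0 1 | M < |h x|} ≤ volume (Ioc 0 s) :=
        measure_mono fun x hx => ⟨hx.1.1, not_lt.1 fun hsx => (hM x ⟨hsx, hx.1.2⟩).not_gt hx.2⟩
    _ = ENNReal.ofReal s := by rw [Real.volume_Ioc, sub_zero]

lemma decRearr_le_of_abs_le {s M : ℝ} (hs : 0 ≤ s) (hM₀ : 0 ≤ M)
    (hM : ∀ x ∈ Ioo s 1, |h x| ≤ M) : decRearr h s ≤ M :=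
  csInf_le ⟨0, fun _ hl => hl.1⟩ ⟨hM₀, toReal_volume_lt_abs_le hs hM⟩

lemma le_decRearr_of_lt_volume {s m M : ℝ} (hs : 0 ≤ s) (hM₀ : 0 ≤ M)
    (hM : ∀ x ∈ Ioo s 1, |h x| ≤ M)
    (hm : ENNReal.ofReal s < volume {x ∈ Ioo 0 1 | m ≤ |h x|}) : m ≤ decRearr h s := by
  refine le_csInf ⟨M, hM₀, toReal_volume_lt_abs_le hs hM⟩ fun l ⟨_, hl⟩ => ?_
  by_contra! hlm
  have hfin : volume {x ∈ Ioo 0 1 | l < |h x|} ≠ ∞ :=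
    measure_ne_top_of_subset (fun x hx => hx.1) (by simp [Real.volume_Ioo])
  refine ((ENNReal.le_ofReal_iff_toReal_le hfin hs).2 hl).not_gt (hm.trans_le ?_)
  exact measure_mono fun x hx => ⟨hx.1, hlm.trans_le hx.2⟩

lemma antitoneOn_decRearr (hbdd : ∀ s ∈ Ioo 0 1, ∃ M, 0 ≤ M ∧ ∀ x ∈ Ioo s 1, |h x| ≤ M) :
    AntitoneOn (decRearr h) (Ioo 0 1) := fun s hs s' _ hss' => by
  obtain ⟨M, hM₀, hM⟩ := hbdd s hs
  exact csInf_le_csInf ⟨0, fun _ hl => hl.1⟩ ⟨M, hM₀, toReal_volume_lt_abs_le hs.1.le hM⟩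
    fun l hl => ⟨hl.1, hl.2.trans hss'⟩

lemma ofReal_decRearr_rpow_le {s q : ℝ} {C : ℝ≥0∞} (hs : 0 ≤ s) (hq : 0 < q)
    (hC : ∀ x ∈ Ioo s 1, ENNReal.ofReal (|h x| ^ q) ≤ C) :
    ENNReal.ofReal (decRearr h s ^ q) ≤ C := by
  rcases eq_or_ne C ∞ with rfl | hC_top
  · exact le_top
  have hD : decRearr h s ≤ C.toReal ^ q⁻¹ :=
    decRearr_le_of_abs_le hs (by positivity) fun x hx =>
      (Real.le_rpow_inv_iff_of_pos (abs_nonneg _) ENNReal.toReal_nonneg hq).2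
        ((ENNReal.ofReal_le_iff_le_toReal hC_top).1 (hC x hx))
  exact ENNReal.ofReal_le_of_le_toReal
    ((Real.le_rpow_inv_iff_of_pos (decRearr_nonneg h s) ENNReal.toReal_nonneg hq).1 hD)

end decRearr

section AntitoneWeight

variable {β q : ℝ} {g : ℝ → ℝ}

lemma abs_rpow_mul_le_of_antitoneOn (hβ : 0 ≤ β) (hg : AntitoneOn g (Ioo 0 1))
    (hg₀ : ∀ t ∈ Ioo 0 1, 0 ≤ g t) {s : ℝ} (hs : s ∈ Ioo 0 1) :
    ∀ x ∈ Ioo s 1, |x ^ β * g x| ≤ g s := fun x hx => by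
  have hx₀ : x ∈ Ioo 0 1 := ⟨hs.1.trans hx.1, hx.2⟩
  rw [abs_of_nonneg (mul_nonneg (Real.rpow_nonneg hx₀.1.le β) (hg₀ x hx₀))]
  calc x ^ β * g x ≤ 1 * g x :=
        mul_le_mul_of_nonneg_right (Real.rpow_le_one hx₀.1.le hx₀.2.le hβ) (hg₀ x hx₀)
    _ ≤ g s := by rw [one_mul]; exact hg hs hx₀ hx.1.le

lemma rpow_mul_le_decRearr (hβ : 0 ≤ β) (hg : AntitoneOn g (Ioo 0 1))
    (hg₀ : ∀ t ∈ Ioo 0 1, 0 ≤ g t) {s : ℝ} (hs : s ∈ Ioo 0 (1 / 3)) :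
    s ^ β * g (3 * s) ≤ decRearr (fun x => x ^ β * g x) s := by
  have hs₁ : s ∈ Ioo 0 1 := ⟨hs.1, by linarith [hs.2]⟩
  have h3s : 3 * s ∈ Ioo 0 1 := ⟨by linarith [hs.1], by linarith [hs.2]⟩
  refine le_decRearr_of_lt_volume hs.1.le (hg₀ s hs₁)
    (abs_rpow_mul_le_of_antitoneOn hβ hg hg₀ hs₁) ?_
  calc ENNReal.ofReal s < ENNReal.ofReal (3 * s - s) :=
        (ENNReal.ofReal_lt_ofReal_iff (by linarith [hs.1])).2 (by linarith [hs.1])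
    _ = volume (Ioc s (3 * s)) := (Real.volume_Ioc).symm
    _ ≤ _ := measure_mono fun x hx => by
      have hx₀ : x ∈ Ioo 0 1 := ⟨hs.1.trans hx.1, hx.2.trans_lt h3s.2⟩
      refine ⟨hx₀, le_trans ?_ (le_abs_self _)⟩
      exact mul_le_mul (Real.rpow_le_rpow hs.1.le hx.1.le hβ) (hg hx₀ h3s hx.2) (hg₀ _ h3s)
        (Real.rpow_nonneg hx₀.1.le β)

lemma ofReal_rpow_mul_rpow_le_lintegral (hβ : 0 ≤ β) (hq : 0 < q) (hg : AntitoneOn g (Ioo 0 1))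
    (hg₀ : ∀ t ∈ Ioo 0 1, 0 ≤ g t) {x : ℝ} (hx : x ∈ Ioo 0 1) :
    ENNReal.ofReal ((x ^ β * g x) ^ q) ≤ ENNReal.ofReal (2 ^ (1 + β * q)) *
      ∫⁻ u in Ioo (x / 2) x, ENNReal.ofReal ((u ^ β * g u) ^ q / u) := by
  have hbase₀ : 0 ≤ x ^ β * g x := mul_nonneg (Real.rpow_nonneg hx.1.le β) (hg₀ x hx)
  have hhalf₀ : 0 ≤ (x / 2) ^ β * g x :=
    mul_nonneg (Real.rpow_nonneg (by linarith [hx.1]) β) (hg₀ x hx)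
  have hm : ∀ u ∈ Ioo (x / 2) x, ((x / 2) ^ β * g x) ^ q / x ≤ (u ^ β * g u) ^ q / u :=
    fun u hu => by
      have hu₀ : u ∈ Ioo 0 1 := ⟨by linarith [hu.1, hx.1], hu.2.trans hx.2⟩
      have hbase : (x / 2) ^ β * g x ≤ u ^ β * g u :=
        mul_le_mul (Real.rpow_le_rpow (by linarith [hx.1]) hu.1.le hβ) (hg hu₀ hx hu.2.le)
          (hg₀ x hx) (Real.rpow_nonneg hu₀.1.le β)
      exact div_le_div₀ (hhalf₀.trans hbase |> (Real.rpow_nonneg · q))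
        (Real.rpow_le_rpow hhalf₀ hbase hq.le) hu₀.1 hu.2.le
  have halg : 2 ^ (1 + β * q) * (((x / 2) ^ β * g x) ^ q / x * (x - x / 2))
      = (x ^ β * g x) ^ q := by
    rw [Real.div_rpow hx.1.le zero_le_two, div_mul_eq_mul_div (x ^ β),
      Real.div_rpow hbase₀ (by positivity), ← Real.rpow_mul zero_le_two,
      Real.rpow_add two_pos, Real.rpow_one]
    field_simp [hx.1.ne']
    ring
  calc ENNReal.ofReal ((x ^ β * g x) ^ q)
      = ENNReal.ofReal (2 ^ (1 + β * q)) *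
          (ENNReal.ofReal (((x / 2) ^ β * g x) ^ q / x) * volume (Ioo (x / 2) x)) := by
        rw [Real.volume_Ioo, ← ENNReal.ofReal_mul (div_nonneg (Real.rpow_nonneg hhalf₀ q) hx.1.le),
          ← ENNReal.ofReal_mul (by positivity), halg]
    _ ≤ _ := by
        rw [← setLIntegral_const]
        exact mul_le_mul_right
          (setLIntegral_mono' measurableSet_Ioo fun u hu => ENNReal.ofReal_le_ofReal (hm u hu)) _

lemma ofReal_decRearr_rpow_le_lintegral (hβ : 0 ≤ β) (hq : 0 < q) (hg : AntitoneOn g (Ioo 0 1))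
    (hg₀ : ∀ t ∈ Ioo 0 1, 0 ≤ g t) {t : ℝ} (ht : t ∈ Ioo 0 1) :
    ENNReal.ofReal (decRearr (fun x => x ^ β * g x) t ^ q) ≤ ENNReal.ofReal (2 ^ (1 + β * q)) *
      ∫⁻ u in Ioo (t / 2) 1, ENNReal.ofReal ((u ^ β * g u) ^ q / u) :=
  ofReal_decRearr_rpow_le ht.1.le hq fun x hx => by
    have hx₀ : x ∈ Ioo 0 1 := ⟨ht.1.trans hx.1, hx.2⟩
    rw [abs_of_nonneg (mul_nonneg (Real.rpow_nonneg hx₀.1.le β) (hg₀ x hx₀))]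
    exact (ofReal_rpow_mul_rpow_le_lintegral hβ hq hg hg₀ hx₀).trans (mul_le_mul_right
      (lintegral_mono_set (Ioo_subset_Ioo (by linarith [hx.1]) hx.2.le)) _)

lemma lintegral_rpow_mul_le_lintegral_decRearr {a : ℝ} (hβ : 0 ≤ β) (hq : 0 ≤ q)
    (hg : AntitoneOn g (Ioo 0 1)) (hg₀ : ∀ t ∈ Ioo 0 1, 0 ≤ g t) :
    ∫⁻ t in Ioo 0 1, ENNReal.ofReal ((t ^ (a + β) * g t) ^ q / t)
      ≤ ENNReal.ofReal ((3 ^ (a + β)) ^ q) *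
        ∫⁻ t in Ioo 0 1, ENNReal.ofReal ((t ^ a * decRearr (fun x => x ^ β * g x) t) ^ q / t) := by
  set φ : ℝ → ℝ≥0∞ := fun t => ENNReal.ofReal ((t ^ (a + β) * g t) ^ q / t)
  calc ∫⁻ t in Ioo 0 1, φ t = ∫⁻ s in Ioo 0 (1 / 3), ENNReal.ofReal 3 * φ (3 * s) := by
        rw [lintegral_const_mul' _ _ ENNReal.ofReal_ne_top, lintegral_Ioo_comp_mul_left φ three_pos,
          mul_one_div_cancel three_ne_zero, ← mul_assoc, ← ENNReal.ofReal_mul zero_le_three,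
          mul_inv_cancel₀ three_ne_zero, ENNReal.ofReal_one, one_mul]
    _ ≤ ∫⁻ s in Ioo 0 (1 / 3), ENNReal.ofReal ((3 ^ (a + β)) ^ q) *
          ENNReal.ofReal ((s ^ a * decRearr (fun x => x ^ β * g x) s) ^ q / s) := by
        refine setLIntegral_mono' measurableSet_Ioo fun s hs => ?_
        have h3s : 3 * s ∈ Ioo 0 1 := ⟨by linarith [hs.1], by linarith [hs.2]⟩
        have hb : 0 ≤ s ^ a * (s ^ β * g (3 * s)) := mul_nonneg (Real.rpow_nonneg hs.1.le a)
          (mul_nonneg (Real.rpow_nonneg hs.1.le β) (hg₀ _ h3s))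
        have hsplit :
            (3 * s) ^ (a + β) * g (3 * s) = 3 ^ (a + β) * (s ^ a * (s ^ β * g (3 * s))) := by
          rw [Real.mul_rpow zero_le_three hs.1.le, Real.rpow_add hs.1]
          ring
        have hφ : 3 * (((3 * s) ^ (a + β) * g (3 * s)) ^ q / (3 * s))
            = (3 ^ (a + β)) ^ q * ((s ^ a * (s ^ β * g (3 * s))) ^ q / s) := by
          rw [hsplit, Real.mul_rpow (by positivity) hb]
          field_simp
        rw [← ENNReal.ofReal_mul zero_le_three, hφ, ← ENNReal.ofReal_mul (by positivity)]
        refine ENNReal.ofReal_le_ofReal (mul_le_mul_of_nonneg_left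
          (div_le_div_of_nonneg_right (Real.rpow_le_rpow hb ?_ hq) hs.1.le) (by positivity))
        exact mul_le_mul_of_nonneg_left (rpow_mul_le_decRearr hβ hg hg₀ hs)
          (Real.rpow_nonneg hs.1.le a)
    _ ≤ _ := by
        rw [lintegral_const_mul' _ _ ENNReal.ofReal_ne_top]
        exact mul_le_mul_right (lintegral_mono_set (Ioo_subset_Ioo_right (by norm_num))) _

lemma lintegral_decRearr_le_lintegral_rpow_mul {a : ℝ} (hβ : 0 ≤ β) (ha : 0 < a) (hq : 0 < q)
    (hg : AntitoneOn g (Ioo 0 1)) (hg₀ : ∀ t ∈ Ioo 0 1, 0 ≤ g t) :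
    ∫⁻ t in Ioo 0 1, ENNReal.ofReal ((t ^ a * decRearr (fun x => x ^ β * g x) t) ^ q / t)
      ≤ ENNReal.ofReal (2 ^ (1 + β * q) * (2 ^ (a * q) / (a * q))) *
        ∫⁻ t in Ioo 0 1, ENNReal.ofReal ((t ^ (a + β) * g t) ^ q / t) := by
  set w : ℝ → ℝ≥0∞ := fun t => ENNReal.ofReal (t ^ (a * q - 1))
  set H : ℝ → ℝ≥0∞ := fun u => ENNReal.ofReal ((u ^ β * g u) ^ q / u)
  have hH : AEMeasurable H (volume.restrict (Ioo 0 1)) := by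
    have := aemeasurable_restrict_of_antitoneOn measurableSet_Ioo hg (μ := volume)
    fun_prop
  calc ∫⁻ t in Ioo 0 1, ENNReal.ofReal ((t ^ a * decRearr (fun x => x ^ β * g x) t) ^ q / t)
      = ∫⁻ t in Ioo 0 1, w t * ENNReal.ofReal (decRearr (fun x => x ^ β * g x) t ^ q) :=
        setLIntegral_congr_fun measurableSet_Ioo fun t ht => by
          rw [rpow_mul_rpow_div_self ht.1 (decRearr_nonneg _ t),
            ENNReal.ofReal_mul (Real.rpow_nonneg ht.1.le _)]
    _ ≤ ∫⁻ t in Ioo 0 1, w t * (ENNReal.ofReal (2 ^ (1 + β * q)) * ∫⁻ u in Ioo (t / 2) 1, H u) :=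
        setLIntegral_mono' measurableSet_Ioo fun t ht =>
          mul_le_mul_right (ofReal_decRearr_rpow_le_lintegral hβ hq hg hg₀ ht) _
    _ = ENNReal.ofReal (2 ^ (1 + β * q)) * ∫⁻ t in Ioo 0 1, w t * ∫⁻ u in Ioo (t / 2) 1, H u := by
        rw [← lintegral_const_mul' _ _ ENNReal.ofReal_ne_top]
        simp only [mul_left_comm]
    _ ≤ ENNReal.ofReal (2 ^ (1 + β * q)) * ∫⁻ u in Ioo 0 1, (∫⁻ t in Ioo 0 (2 * u), w t) * H u :=
        mul_le_mul_right (lintegral_mul_lintegral_Ioo_div_two_le (by fun_prop) hH) _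
    _ = ENNReal.ofReal (2 ^ (1 + β * q)) * ∫⁻ u in Ioo 0 1, ENNReal.ofReal (2 ^ (a * q) / (a * q)) *
          ENNReal.ofReal ((u ^ (a + β) * g u) ^ q / u) := by
        congr 1
        refine setLIntegral_congr_fun measurableSet_Ioo fun u hu => ?_
        have hb := mul_nonneg (Real.rpow_nonneg hu.1.le β) (hg₀ u hu)
        rw [lintegral_Ioo_ofReal_rpow (by nlinarith) (by linarith [hu.1]), sub_add_cancel,
          ← ENNReal.ofReal_mul
            (div_nonneg (Real.rpow_nonneg (by linarith [hu.1]) _) (by positivity)),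
          ← ENNReal.ofReal_mul (by positivity)]
        congr 1
        rw [Real.mul_rpow zero_le_two hu.1.le, Real.rpow_add hu.1, mul_assoc,
          Real.mul_rpow (Real.rpow_nonneg hu.1.le a) hb, ← Real.rpow_mul hu.1.le]
        ring
    _ = _ := by
        rw [lintegral_const_mul' _ _ ENNReal.ofReal_ne_top, ← mul_assoc,
          ← ENNReal.ofReal_mul (by positivity)]

end AntitoneWeight

lemma intervalIntegral_zero_one_eq_toReal_lintegral {φ : ℝ → ℝ}
    (hφ : AEMeasurable φ (volume.restrict (Ioo 0 1))) (h₀ : ∀ t ∈ Ioo 0 1, 0 ≤ φ t) :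
    ∫ t in (0:ℝ)..1, φ t = (∫⁻ t in Ioo 0 1, ENNReal.ofReal (φ t)).toReal := by
  rw [intervalIntegral.integral_of_le zero_le_one, integral_Ioc_eq_integral_Ioo]
  exact integral_eq_lintegral_of_nonneg_ae
    ((ae_restrict_iff' measurableSet_Ioo).2 (ae_of_all _ h₀)) hφ.aestronglyMeasurable

lemma toReal_rpow_le_of_le_ofReal_mul {A B : ℝ≥0∞} {c c' q : ℝ} (hc : 0 ≤ c) (hq : 0 ≤ q)
    (hAB : A ≤ ENNReal.ofReal c * B) (hBA : B ≤ ENNReal.ofReal c' * A) :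
    A.toReal ^ q ≤ c ^ q * B.toReal ^ q := by
  rw [← Real.mul_rpow hc ENNReal.toReal_nonneg]
  refine Real.rpow_le_rpow ENNReal.toReal_nonneg ?_ hq
  rcases eq_or_ne B ∞ with hB | hB
  · have hA : A = ∞ := by_contra fun hA =>
      ENNReal.mul_ne_top ENNReal.ofReal_ne_top hA (top_le_iff.1 (hB ▸ hBA))
    simp [hA, hB]
  · simpa [ENNReal.toReal_mul, hc] using
      ENNReal.toReal_mono (ENNReal.mul_ne_top ENNReal.ofReal_ne_top hB) hAB

/-- For nonincreasing nonnegative `g` on `(0,1)`,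
`‖t^{1/α} g(t)‖_{L^{p,q}(0,1)} ≃ ‖g‖_{L^{pα/(p+α),q}(0,1)}`
with constants depending only on `p, q, α`. -/
theorem stmt7 (α p q : ℝ) (hα : 0 < α) (hp : 1 ≤ p) (hq : 1 ≤ q) :
    ∃ c > 0, ∀ g : ℝ → ℝ, AntitoneOn g (Set.Ioo 0 1) →
      (∀ t ∈ Set.Ioo (0:ℝ) 1, 0 ≤ g t) →
      ((1/c) * (∫ t in (0:ℝ)..1, (t ^ (1/p + 1/α) * g t) ^ q / t) ^ (1/q)
          ≤ (∫ t in (0:ℝ)..1,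
              (t ^ (1/p) * decRearr (fun x => x ^ (1/α) * g x) t) ^ q / t) ^ (1/q)
        ∧ (∫ t in (0:ℝ)..1,
              (t ^ (1/p) * decRearr (fun x => x ^ (1/α) * g x) t) ^ q / t) ^ (1/q)
          ≤ c * (∫ t in (0:ℝ)..1, (t ^ (1/p + 1/α) * g t) ^ q / t) ^ (1/q)) := by
  have hp₀ : 0 < p := by linarith
  have hq₀ : 0 < q := by linarith
  have hβ : 0 ≤ 1 / α := by positivity
  set c₁ : ℝ := (3 ^ (1/p + 1/α)) ^ q
  set c₂ : ℝ := 2 ^ (1 + 1/α * q) * (2 ^ (1/p * q) / (1/p * q))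
  refine ⟨max (c₁ ^ (1/q)) (c₂ ^ (1/q)), by positivity, fun g hg hg₀ => ?_⟩
  have hgm := aemeasurable_restrict_of_antitoneOn measurableSet_Ioo hg (μ := volume)
  have hDm := aemeasurable_restrict_of_antitoneOn measurableSet_Ioo (μ := volume)
    (antitoneOn_decRearr fun s hs => ⟨g s, hg₀ s hs, abs_rpow_mul_le_of_antitoneOn hβ hg hg₀ hs⟩)
  rw [intervalIntegral_zero_one_eq_toReal_lintegral (by fun_prop) fun t ht => div_nonneg
      (Real.rpow_nonneg (mul_nonneg (Real.rpow_nonneg ht.1.le _) (hg₀ t ht)) q) ht.1.le,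
    intervalIntegral_zero_one_eq_toReal_lintegral (by fun_prop) fun t ht => div_nonneg
      (Real.rpow_nonneg (mul_nonneg (Real.rpow_nonneg ht.1.le _) (decRearr_nonneg _ t)) q) ht.1.le]
  have hlower := lintegral_rpow_mul_le_lintegral_decRearr (a := 1/p) hβ hq₀.le hg hg₀
  have hupper := lintegral_decRearr_le_lintegral_rpow_mul hβ (by positivity : 0 < 1/p) hq₀ hg hg₀
  have hB := toReal_rpow_le_of_le_ofReal_mul (q := 1/q) (by positivity) (by positivity)
    hlower hupper
  have hA := toReal_rpow_le_of_le_ofReal_mul (q := 1/q) (by positivity) (by positivity)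
    hupper hlower
  constructor
  · rw [one_div_mul_eq_div, div_le_iff₀ (by positivity), mul_comm]
    exact hB.trans (by gcongr; exact le_max_left _ _)
  · exact hA.trans (by gcongr; exact le_max_right _ _)
end

section
/- Let I : [0,1] → [0,∞) satisfy I(s) = I(1-s) for all s, and let Y, Z be rearrangement-invariant quasi-normed spaces on (0,1). Suppose ‖ χ_{(0,1/2)}(t) ∫_t^{1/2} f(s)/I(s) ds ‖_Y ≤ C₀ ‖f‖_Z for all f. Then there is C₁ > 0 such that ‖ ∫_t^{1/2} f(s)/I(s) ds ‖_Y ≤ C₁ ‖f‖_Z, where for t ∈ (1/2,1) the integral ∫_t^{1/2} means −∫_{1/2}^t. -/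
open MeasureTheory

lemma refl_vol (h : ℝ → ℝ) (l : ℝ) :
    volume {t ∈ Set.Ioo (0:ℝ) 1 | l < |h (1 - t)|}
      = volume {t ∈ Set.Ioo (0:ℝ) 1 | l < |h t|} := by
  have hset : {t ∈ Set.Ioo (0:ℝ) 1 | l < |h (1 - t)|}
      = (fun t : ℝ => 1 - t) ⁻¹' {t ∈ Set.Ioo (0:ℝ) 1 | l < |h t|} := by
    ext t
    simp only [Set.mem_setOf_eq, Set.mem_preimage, Set.mem_Ioo]
    constructor <;> rintro ⟨⟨h1, h2⟩, h3⟩ <;> exact ⟨⟨by linarith, by linarith⟩, h3⟩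
  have hemb : MeasurableEmbedding (fun t : ℝ => 1 - t) :=
    (MeasurableEquiv.subLeft (1:ℝ)).measurableEmbedding
  rw [hset, ← hemb.map_apply,
    (MeasureTheory.Measure.measurePreserving_sub_left volume (1:ℝ)).map_eq]

/-- Boundedness of the truncated isoperimetric Hardy operator on `(0,1/2)` extends
to the full operator on `(0,1)`, using the symmetry `I(s) = I(1-s)` and
rearrangement invariance of `Y` and `Z`. -/
theorem stmt13 (I : ℝ → ℝ) (hsymm : ∀ s : ℝ, I s = I (1 - s))
    (NY NZ : (ℝ → ℝ) → ℝ) (CY CZ : ℝ) (hCY : 1 ≤ CY) (hCZ : 1 ≤ CZ)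
    (hYquasi : ∀ f g : ℝ → ℝ, NY (f + g) ≤ CY * (NY f + NY g))
    (hZquasi : ∀ f g : ℝ → ℝ, NZ (f + g) ≤ CZ * (NZ f + NZ g))
    (hYmono : ∀ f g : ℝ → ℝ, (∀ t ∈ Set.Ioo (0:ℝ) 1, |f t| ≤ |g t|) → NY f ≤ NY g)
    (hZmono : ∀ f g : ℝ → ℝ, (∀ t ∈ Set.Ioo (0:ℝ) 1, |f t| ≤ |g t|) → NZ f ≤ NZ g)
    (hYri : ∀ f g : ℝ → ℝ,
      (∀ l : ℝ, 0 < l →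
        MeasureTheory.volume {t ∈ Set.Ioo (0:ℝ) 1 | l < |f t|}
          = MeasureTheory.volume {t ∈ Set.Ioo (0:ℝ) 1 | l < |g t|}) → NY f = NY g)
    (hZri : ∀ f g : ℝ → ℝ,
      (∀ l : ℝ, 0 < l →
        MeasureTheory.volume {t ∈ Set.Ioo (0:ℝ) 1 | l < |f t|}
          = MeasureTheory.volume {t ∈ Set.Ioo (0:ℝ) 1 | l < |g t|}) → NZ f = NZ g)
    (C₀ : ℝ) (hC₀ : 0 < C₀)
    (hbound : ∀ f : ℝ → ℝ,
      NY (Set.indicator (Set.Ioo 0 (1/2)) (fun t => ∫ s in t..(1/2:ℝ), f s / I s))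
        ≤ C₀ * NZ f) :
    ∃ C₁ > 0, ∀ f : ℝ → ℝ,
      NY (fun t => ∫ s in t..(1/2:ℝ), f s / I s) ≤ C₁ * NZ f := by
  refine ⟨2 * CY * C₀, by positivity, fun f => ?_⟩
  set Q : (ℝ → ℝ) → ℝ → ℝ := fun h t => ∫ s in t..(1/2:ℝ), h s / I s with hQ
  set g : ℝ → ℝ := fun t => f (1 - t) with hg
  set A : ℝ → ℝ := Set.indicator (Set.Ioo 0 (1/2)) (Q f) with hA
  set B : ℝ → ℝ := Set.indicator (Set.Ici (1/2)) (Q f) with hB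
  set Ag : ℝ → ℝ := Set.indicator (Set.Ioo 0 (1/2)) (Q g) with hAg
  -- key pointwise identity : Q g (1 - t) = - Q f t
  have hkey : ∀ t : ℝ, Q g (1 - t) = - Q f t := by
    intro t
    have h1 : ∀ s : ℝ, g s / I s = (fun u => f u / I u) (1 - s) := by
      intro s; simp only [hg]; rw [hsymm s]
    calc Q g (1 - t) = ∫ s in (1-t)..(1/2:ℝ), (fun u => f u / I u) (1 - s) := by
          simp only [hQ]; exact intervalIntegral.integral_congr fun s _ => h1 s
      _ = ∫ s in (1 - (1/2:ℝ))..(1 - (1 - t)), f s / I s := by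
          rw [intervalIntegral.integral_comp_sub_left (fun u => f u / I u) 1]
      _ = - Q f t := by
          simp only [hQ]
          rw [show (1 : ℝ) - (1 - t) = t by ring, show (1:ℝ) - 1/2 = 1/2 by norm_num,
            ← intervalIntegral.integral_symm]
  -- on (0,1), Q f = A + B
  have hsum : ∀ t ∈ Set.Ioo (0:ℝ) 1, Q f t = (A + B) t := by
    intro t ht
    simp only [Pi.add_apply, hA, hB]
    rcases lt_or_ge t (1/2 : ℝ) with h | h
    · rw [Set.indicator_of_mem (Set.mem_Ioo.mpr ⟨ht.1, h⟩),
        Set.indicator_of_notMem (Set.notMem_Ici.mpr h), add_zero]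
    · rw [Set.indicator_of_notMem (fun hc => absurd (Set.mem_Ioo.mp hc).2 (not_lt.2 h)),
        Set.indicator_of_mem (Set.mem_Ici.mpr h), zero_add]
  -- |B t| = |Ag (1 - t)| on (0,1)
  have hBA : ∀ t ∈ Set.Ioo (0:ℝ) 1, |B t| = |Ag (1 - t)| := by
    intro t ht
    simp only [hB, hAg]
    rcases lt_or_ge t (1/2 : ℝ) with h | h
    · rw [Set.indicator_of_notMem (Set.notMem_Ici.mpr h),
        Set.indicator_of_notMem
          (fun hc => absurd (Set.mem_Ioo.mp hc).2 (not_lt.2 (by linarith)))]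
    · rcases eq_or_lt_of_le h with h' | h'
      · rw [Set.indicator_of_mem (Set.mem_Ici.mpr h),
          Set.indicator_of_notMem
            (fun hc => absurd (Set.mem_Ioo.mp hc).2 (not_lt.2 (by rw [← h']; norm_num)))]
        rw [← h']
        simp [hQ]
      · rw [Set.indicator_of_mem (Set.mem_Ici.mpr h),
          Set.indicator_of_mem (Set.mem_Ioo.mpr ⟨by linarith [ht.2], by linarith⟩),
          hkey t, abs_neg]
  -- NY (Q f) ≤ CY * (NY A + NY B)
  have step1 : NY (Q f) ≤ CY * (NY A + NY B) :=
    le_trans (hYmono _ _ (fun t ht => le_of_eq (by rw [hsum t ht]))) (hYquasi A B)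
  -- NY B = NY Ag
  have step2 : NY B = NY (fun t => Ag (1 - t)) :=
    le_antisymm (hYmono _ _ fun t ht => le_of_eq (hBA t ht))
      (hYmono _ _ fun t ht => le_of_eq (hBA t ht).symm)
  have step3 : NY (fun t => Ag (1 - t)) = NY Ag :=
    hYri _ _ fun l _ => refl_vol Ag l
  -- NZ g = NZ f
  have step4 : NZ g = NZ f := hZri _ _ fun l _ => refl_vol f l
  have hbA : NY A ≤ C₀ * NZ f := hbound f
  have hbB : NY Ag ≤ C₀ * NZ f := by rw [← step4]; exact hbound g
  have hCY0 : (0:ℝ) < CY := lt_of_lt_of_le one_pos hCY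
  calc NY (Q f) ≤ CY * (NY A + NY B) := step1
    _ = CY * (NY A + NY Ag) := by rw [step2, step3]
    _ ≤ CY * (C₀ * NZ f + C₀ * NZ f) := by
        apply mul_le_mul_of_nonneg_left (add_le_add hbA hbB) hCY0.le
    _ = 2 * CY * C₀ * NZ f := by ring
end
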